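/- arXiv:1905.08234 — 3 statements merged into one kernel-verified Lean document; each statement's English description precedes it below -/
import Mathlib

section
/- In the winner-bid auction with valuations v_l < v_h, in every Nash equilibrium (allowing mixed strategies) the minimal bid in the support of the higher-valuation agent's strategy is at least v_l/2. -/
open Finset Filter

/-- Utility in the winner-bid auction for an agent with value `v` bidding `b`
when the opponent bids `c`: the higher bidder wins the object and pays their own
bid to the other agent; ties are broken uniformly at random. -/
noncomputable def util (v b c : ℕ) : ℝ :=
  if c < b then (v : ℝ) - b
  else if b < c then (c : ℝ)
  else (((v : ℝ) - b) + b) / 2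

/-- Expected utility of bidding `b` against the mixed strategy `σ` of the opponent. -/
noncomputable def eu (pbar v : ℕ) (σ : ℕ → ℝ) (b : ℕ) : ℝ :=
  ∑ c ∈ range (pbar + 1), σ c * util v b c

/-- A mixed strategy on the bid space `{0,...,pbar}`. -/
def IsStrategy (pbar : ℕ) (σ : ℕ → ℝ) : Prop :=
  (∀ b, 0 ≤ σ b) ∧ (∑ b ∈ range (pbar + 1), σ b = 1) ∧ ∀ b, pbar < b → σ b = 0

/-- Nash equilibrium of the winner-bid auction with valuations `vl` (agent l) and
`vh` (agent h). -/
def IsNash (pbar vl vh : ℕ) (σl σh : ℕ → ℝ) : Prop :=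
  IsStrategy pbar σl ∧ IsStrategy pbar σh ∧
  (∀ b ∈ range (pbar + 1), 0 < σl b →
    ∀ b' ∈ range (pbar + 1), eu pbar vl σh b' ≤ eu pbar vl σh b) ∧
  (∀ b ∈ range (pbar + 1), 0 < σh b →
    ∀ b' ∈ range (pbar + 1), eu pbar vh σl b' ≤ eu pbar vh σl b)

/-- Expected payoff of the agent with value `v` playing `σown` against `σopp`. -/
noncomputable def payoff (pbar v : ℕ) (σown σopp : ℕ → ℝ) : ℝ :=
  ∑ b ∈ range (pbar + 1), σown b * eu pbar v σopp b

/-- Probability that the agent playing `σown` receives the object. -/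
noncomputable def winProb (pbar : ℕ) (σown σopp : ℕ → ℝ) : ℝ :=
  ∑ b ∈ range (pbar + 1), ∑ c ∈ range (pbar + 1),
    σown b * σopp c * (if c < b then 1 else if b < c then 0 else 1 / 2)

/-- An equilibrium is efficient if the higher-valuation agent (playing `σh`)
receives the object with probability one, i.e., the lower-valuation agent
receives it with probability zero. -/
def Efficient (pbar : ℕ) (σl σh : ℕ → ℝ) : Prop := winProb pbar σl σh = 0

/-- The pure strategy bidding `b`. -/
noncomputable def pureS (b : ℕ) : ℕ → ℝ := fun c => if c = b then 1 else 0

/-- Weak payoff monotonicity for the agent with value `v` playing `σown` against `σopp`. -/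
def WPMon (pbar v : ℕ) (σown σopp : ℕ → ℝ) : Prop :=
  ∀ m ∈ range (pbar + 1), ∀ n ∈ range (pbar + 1),
    σown n < σown m → eu pbar v σopp n < eu pbar v σopp m

/-- (Full) payoff monotonicity for the agent with value `v`. -/
def PMon (pbar v : ℕ) (σown σopp : ℕ → ℝ) : Prop :=
  ∀ m ∈ range (pbar + 1), ∀ n ∈ range (pbar + 1),
    (eu pbar v σopp n ≤ eu pbar v σopp m ↔ σown n ≤ σown m)

/-- Empirical equilibrium: a Nash equilibrium that is the pointwise limit of a
sequence of weakly payoff monotone strategy profiles. -/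
def IsEmpirical (pbar vl vh : ℕ) (σl σh : ℕ → ℝ) : Prop :=
  IsNash pbar vl vh σl σh ∧
  ∃ s : ℕ → (ℕ → ℝ) × (ℕ → ℝ),
    (∀ n, IsStrategy pbar (s n).1 ∧ IsStrategy pbar (s n).2 ∧
      WPMon pbar vl (s n).1 (s n).2 ∧ WPMon pbar vh (s n).2 (s n).1) ∧
    ∀ b, Tendsto (fun n => (s n).1 b) atTop (nhds (σl b)) ∧
         Tendsto (fun n => (s n).2 b) atTop (nhds (σh b))


/-
Suppose the lowest bid `β` of the high-value agent `h` were below `vl/2`, and let `α` be the lowest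
bid of the low-value agent `l`. Then `β ≤ α`, since otherwise `l` gains by raising `α` to `β` and
winning the tie at `β`. Next `vh/2 ≤ α`: otherwise `h` gains by raising `β` to `α` (or to `β + 1`
when `α = β`), because a tie at a bid below `vh/2` is worth more to `h` than losing it. But then
`α - 1 > β` and `α > vl/2`, so `l` gains by lowering `α` by one: it pays one less whenever it wins,
and at the two bids `α - 1, α` the ties and losses are worth more than before.
-/

lemma util_of_lt {v b c : ℕ} (h : c < b) : util v b c = v - b := by
  simp [util, h]

lemma util_of_gt {v b c : ℕ} (h : b < c) : util v b c = c := by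
  rw [util, if_neg (Nat.lt_asymm h), if_pos h]

lemma util_self (v b : ℕ) : util v b b = v / 2 := by
  simp [util]

lemma IsStrategy.mem_range_of_pos {pbar : ℕ} {σ : ℕ → ℝ} (hσ : IsStrategy pbar σ) {b : ℕ}
    (hb : 0 < σ b) : b ∈ range (pbar + 1) := by
  by_contra h
  exact hb.ne' (hσ.2.2 b (by simpa using h))

lemma IsStrategy.exists_pos {pbar : ℕ} {σ : ℕ → ℝ} (hσ : IsStrategy pbar σ) : ∃ b, 0 < σ b := by
  obtain ⟨b, -, hb⟩ := exists_ne_zero_of_sum_ne_zero (hσ.2.1 ▸ one_ne_zero)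
  exact ⟨b, (hσ.1 b).lt_of_ne' hb⟩

lemma exists_min_pos {σ : ℕ → ℝ} (hσ : ∀ b, 0 ≤ σ b) {b : ℕ} (hb : 0 < σ b) :
    ∃ β ≤ b, 0 < σ β ∧ ∀ i < β, σ i = 0 := by
  classical
  have hex : ∃ n, 0 < σ n := ⟨b, hb⟩
  exact ⟨Nat.find hex, Nat.find_min' hex hb, Nat.find_spec hex,
    fun i hi => le_antisymm (not_lt.mp (Nat.find_min hex hi)) (hσ i)⟩

section ExpectedUtility

variable {pbar v : ℕ} {σ : ℕ → ℝ}

lemma eu_sub_eu (b c : ℕ) :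
    eu pbar v σ c - eu pbar v σ b = ∑ i ∈ range (pbar + 1), σ i * (util v c i - util v b i) := by
  simp only [eu, ← sum_sub_distrib, mul_sub]

/-- Raising a bid `b` to the opponent's lowest bid `c` only changes the outcome against `c`,
where a loss becomes a tie. -/
lemma eu_sub_eu_of_lt {b c : ℕ} (hc : c ∈ range (pbar + 1)) (hbc : b < c)
    (hσ : ∀ i < c, σ i = 0) :
    eu pbar v σ c - eu pbar v σ b = σ c * (v / 2 - c) := by
  rw [eu_sub_eu, sum_eq_single c]
  · rw [util_self, util_of_gt hbc]
  · intro i _ hic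
    rcases hic.lt_or_gt with hi | hi
    · simp [hσ i hi]
    · simp [util_of_gt hi, util_of_gt (hbc.trans hi)]
  · exact absurd hc

lemma eu_succ_sub_eu {b : ℕ} (hb : b + 1 ≤ pbar) :
    eu pbar v σ (b + 1) - eu pbar v σ b
      = (σ b + σ (b + 1)) * (v / 2 - (b + 1 : ℕ)) - ∑ i ∈ range b, σ i := by
  obtain ⟨r, hr⟩ : ∃ r, pbar + 1 = b + 2 + r := ⟨pbar - b - 1, by omega⟩
  have hlow : ∑ i ∈ range b, σ i * (util v (b + 1) i - util v b i) = -∑ i ∈ range b, σ i := by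
    rw [← sum_neg_distrib]
    refine sum_congr rfl fun i hi => ?_
    have hi : i < b := mem_range.mp hi
    rw [util_of_lt hi, util_of_lt (hi.trans b.lt_succ_self)]
    push_cast
    ring
  have hhigh : ∑ j ∈ range r, σ (b + 2 + j) * (util v (b + 1) (b + 2 + j) - util v b (b + 2 + j))
      = 0 :=
    sum_eq_zero fun j _ => by rw [util_of_gt (by omega), util_of_gt (by omega), sub_self, mul_zero]
  rw [eu_sub_eu, hr, sum_range_add, hhigh, add_zero, sum_range_succ, sum_range_succ, hlow,
    util_of_lt b.lt_succ_self, util_self, util_self, util_of_gt b.lt_succ_self]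
  push_cast
  ring

lemma eu_lt_eu_of_lt_min {b c : ℕ} (hc : c ∈ range (pbar + 1)) (hbc : b < c)
    (hσ : ∀ i < c, σ i = 0) (hσc : 0 < σ c) (hcv : (c : ℝ) < v / 2) :
    eu pbar v σ b < eu pbar v σ c := by
  have := eu_sub_eu_of_lt (v := v) hc hbc hσ
  nlinarith

lemma eu_lt_eu_succ_of_min {b : ℕ} (hσ0 : ∀ i, 0 ≤ σ i) (hb : b + 1 ≤ pbar)
    (hσ : ∀ i < b, σ i = 0) (hσb : 0 < σ b) (hbv : ((b + 1 : ℕ) : ℝ) < v / 2) :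
    eu pbar v σ b < eu pbar v σ (b + 1) := by
  have h := eu_succ_sub_eu (v := v) (σ := σ) hb
  rw [sum_eq_zero fun i hi => hσ i (mem_range.mp hi)] at h
  nlinarith [hσ0 (b + 1)]

lemma eu_succ_lt_eu {a β : ℕ} (hσ0 : ∀ i, 0 ≤ σ i) (ha : a + 1 ≤ pbar) (hβa : β < a)
    (hσβ : 0 < σ β) (hav : (v : ℝ) / 2 < (a + 1 : ℕ)) :
    eu pbar v σ (a + 1) < eu pbar v σ a := by
  have h := eu_succ_sub_eu (v := v) (σ := σ) ha
  have hβ : σ β ≤ ∑ i ∈ range a, σ i :=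
    single_le_sum (fun i _ => hσ0 i) (mem_range.mpr hβa)
  nlinarith [hσ0 a, hσ0 (a + 1)]

end ExpectedUtility

theorem stmt1_general (vl vh pbar : ℕ)
    (hlt : vl < vh) (hpbar : vh / 2 + 2 ≤ pbar) (σl σh : ℕ → ℝ)
    (hN : IsNash pbar vl vh σl σh) :
    ∀ b, 0 < σh b → vl / 2 ≤ b := by
  obtain ⟨hl, hh, hoptl, hopth⟩ := hN
  intro b hb
  by_contra! hbvl
  obtain ⟨β, hβb, hβ, hβmin⟩ := exists_min_pos hh.1 hb
  obtain ⟨α, -, hα, hαmin⟩ := exists_min_pos hl.1 hl.exists_pos.choose_spec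
  have hβr := hh.mem_range_of_pos hβ
  have hαr := hl.mem_range_of_pos hα
  have hβvl : ((β + 1 : ℕ) : ℝ) ≤ vl / 2 := by
    rw [le_div_iff₀ two_pos]
    exact_mod_cast (by omega : (β + 1) * 2 ≤ vl)
  have hvlvh : (vl : ℝ) / 2 < vh / 2 := by gcongr
  have hβα : β ≤ α := by
    by_contra! hαβ
    exact (hoptl α hαr hα β hβr).not_gt <|
      eu_lt_eu_of_lt_min hβr hαβ hβmin hβ (by push_cast at hβvl; linarith)
  have hvhα : (vh : ℝ) / 2 ≤ α := by
    by_contra! hαvh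
    rcases hβα.eq_or_lt with rfl | hβα
    · have hβ1 : β + 1 ≤ pbar := by omega
      exact (hopth β hβr hβ (β + 1) (by simpa using hβ1)).not_gt <|
        eu_lt_eu_succ_of_min hl.1 hβ1 hαmin hα (by linarith)
    · exact (hopth β hβr hβ α hαr).not_gt <| eu_lt_eu_of_lt_min hαr hβα hαmin hα hαvh
  have hβα_succ : β + 1 < α := by exact_mod_cast (show ((β + 1 : ℕ) : ℝ) < α by linarith)
  obtain ⟨a, rfl⟩ : ∃ a, α = a + 1 := ⟨α - 1, by omega⟩
  exact (hoptl (a + 1) hαr hα a (by simp at hαr ⊢; omega)).not_gt <|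
    eu_succ_lt_eu hh.1 (by simpa using hαr) (by omega) hβ (by linarith)

theorem stmt1 (vl vh pbar : ℕ) (hvl : 0 < vl) (hevl : Even vl) (hevh : Even vh)
    (hlt : vl < vh) (hpbar : vh / 2 + 2 ≤ pbar) (σl σh : ℕ → ℝ)
    (hN : IsNash pbar vl vh σl σh) :
    ∀ b, 0 < σh b → vl / 2 ≤ b :=
  stmt1_general vl vh pbar hlt hpbar σl σh hN
end

section
/- In the winner-bid auction with equal valuations v_1 = v_2 = v, every Nash equilibrium gives each agent expected payoff exactly v/2. -/
open Finset Filter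

/-!
The game is constant-sum: for every pair of bids the two utilities add up to `v`. It is also
symmetric, so an agent who copies the opponent's mixed strategy earns exactly `v / 2`. A best
response does at least as well as that deviation, and the two equilibrium payoffs add up to `v`,
so both are `v / 2`.
-/

def IsBestResponse (pbar v : ℕ) (σ τ : ℕ → ℝ) : Prop :=
  ∀ b ∈ range (pbar + 1), 0 < σ b → ∀ b' ∈ range (pbar + 1), eu pbar v τ b' ≤ eu pbar v τ b

lemma util_add_util_swap (v b c : ℕ) : util v b c + util v c b = v := by
  rcases lt_trichotomy b c with h | rfl | h
  · simp [util, h, h.not_gt]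
  · simp [util]
  · simp [util, h, h.not_gt]

lemma payoff_eq_sum_sum (pbar v : ℕ) (σ τ : ℕ → ℝ) :
    payoff pbar v σ τ =
      ∑ b ∈ range (pbar + 1), ∑ c ∈ range (pbar + 1), σ b * τ c * util v b c := by
  simp only [payoff, eu, mul_sum, mul_assoc]

section

variable {pbar : ℕ} (v : ℕ) {σ τ : ℕ → ℝ}

lemma payoff_add_payoff_swap (hσ : IsStrategy pbar σ) (hτ : IsStrategy pbar τ) :
    payoff pbar v σ τ + payoff pbar v τ σ = v := by
  rw [payoff_eq_sum_sum, payoff_eq_sum_sum,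
    sum_comm (f := fun b c => τ b * σ c * util v b c), ← sum_add_distrib]
  calc ∑ b ∈ range (pbar + 1), ((∑ c ∈ range (pbar + 1), σ b * τ c * util v b c) +
          ∑ c ∈ range (pbar + 1), τ c * σ b * util v c b)
      = ∑ b ∈ range (pbar + 1), ∑ c ∈ range (pbar + 1), σ b * τ c * v := by
        refine sum_congr rfl fun b _ => ?_
        rw [← sum_add_distrib]
        refine sum_congr rfl fun c _ => ?_
        linear_combination (σ b * τ c) * util_add_util_swap v b c
    _ = v := by simp only [← sum_mul, ← mul_sum, hσ.2.1, hτ.2.1, mul_one, one_mul]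

lemma payoff_self (hτ : IsStrategy pbar τ) : payoff pbar v τ τ = v / 2 := by
  linarith [payoff_add_payoff_swap v hτ hτ]

variable {v}

lemma eu_le_payoff_of_isBestResponse (hσ : IsStrategy pbar σ)
    (hbr : IsBestResponse pbar v σ τ) {b' : ℕ} (hb' : b' ∈ range (pbar + 1)) :
    eu pbar v τ b' ≤ payoff pbar v σ τ :=
  calc eu pbar v τ b' = ∑ b ∈ range (pbar + 1), σ b * eu pbar v τ b' := by
        rw [← sum_mul, hσ.2.1, one_mul]
    _ ≤ payoff pbar v σ τ := by
        refine sum_le_sum fun b hb => ?_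
        rcases (hσ.1 b).lt_or_eq with hpos | hzero
        · exact mul_le_mul_of_nonneg_left (hbr b hb hpos b' hb') hpos.le
        · simp [← hzero]

lemma payoff_le_payoff_of_isBestResponse {ρ : ℕ → ℝ} (hσ : IsStrategy pbar σ)
    (hbr : IsBestResponse pbar v σ τ) (hρ : IsStrategy pbar ρ) :
    payoff pbar v ρ τ ≤ payoff pbar v σ τ :=
  calc payoff pbar v ρ τ ≤ ∑ b ∈ range (pbar + 1), ρ b * payoff pbar v σ τ :=
        sum_le_sum fun b hb =>
          mul_le_mul_of_nonneg_left (eu_le_payoff_of_isBestResponse hσ hbr hb) (hρ.1 b)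
    _ = payoff pbar v σ τ := by rw [← sum_mul, hρ.2.1, one_mul]

lemma half_le_payoff_of_isBestResponse (hσ : IsStrategy pbar σ) (hτ : IsStrategy pbar τ)
    (hbr : IsBestResponse pbar v σ τ) : (v : ℝ) / 2 ≤ payoff pbar v σ τ :=
  payoff_self v hτ ▸ payoff_le_payoff_of_isBestResponse hσ hbr hτ

end

theorem stmt3_general (v pbar : ℕ) (σ1 σ2 : ℕ → ℝ)
    (hN : IsNash pbar v v σ1 σ2) :
    payoff pbar v σ1 σ2 = (v : ℝ) / 2 ∧ payoff pbar v σ2 σ1 = (v : ℝ) / 2 := by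
  obtain ⟨h1, h2, hbr1, hbr2⟩ := hN
  have hsum := payoff_add_payoff_swap v h1 h2
  have hge1 := half_le_payoff_of_isBestResponse h1 h2 hbr1
  have hge2 := half_le_payoff_of_isBestResponse h2 h1 hbr2
  constructor <;> linarith

theorem stmt3 (v pbar : ℕ) (hv : 0 < v) (hev : Even v)
    (hpbar : v / 2 + 2 ≤ pbar) (σ1 σ2 : ℕ → ℝ)
    (hN : IsNash pbar v v σ1 σ2) :
    payoff pbar v σ1 σ2 = (v : ℝ) / 2 ∧ payoff pbar v σ2 σ1 = (v : ℝ) / 2 :=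
  stmt3_general v pbar σ1 σ2 hN
end

section
/- In the winner-bid auction with v_l < v_h, v_l > 3v_h/8, and separating bid p with v_l/2 + 1 < p < v_l/2 + (v_h/2 − v_l/2)/5 + 4/5, the profile σ_h = δ_p, σ_l = uniform on {y, y+1, ..., p−1} with y = v_l/2 − 3(p − 1 − v_l/2) and n = p − y = 4(p−1−v_l/2) + 1, is a Nash equilibrium in which p is the unique best response for the higher-valuation agent. -/
open Finset Filter

lemma util_le_of_le_two_mul {v p : ℕ} (hv : (v : ℝ) ≤ 2 * p) (b : ℕ) : util v b p ≤ p := by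
  rcases lt_trichotomy b p with h | rfl | h
  · rw [util_of_gt h]
  · rw [util_self]; linarith
  · rw [util_of_lt h]
    have : (p : ℝ) + 1 ≤ b := by exact_mod_cast h
    linarith

lemma eu_pureS {pbar p : ℕ} (hp : p ≤ pbar) (v b : ℕ) : eu pbar v (pureS p) b = util v b p := by
  rw [eu, Finset.sum_eq_single_of_mem p (mem_range.2 (by omega))]
  · simp [pureS]
  · intro c _ hc
    simp [pureS, hc]

lemma isStrategy_pureS {pbar p : ℕ} (hp : p ≤ pbar) : IsStrategy pbar (pureS p) := by
  refine ⟨fun b => ?_, ?_, fun b hb => if_neg (by omega)⟩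
  · unfold pureS; split_ifs <;> norm_num
  · simp [pureS, Finset.sum_ite_eq', show p < pbar + 1 by omega]

lemma eq_of_pureS_pos {p b : ℕ} (h : 0 < pureS p b) : b = p := by
  by_contra hb
  simp [pureS, hb] at h

noncomputable def uniformIco (y p : ℕ) : ℕ → ℝ :=
  fun c => if y ≤ c ∧ c < p then 1 / (p - y : ℕ) else 0

section uniformIco

variable {y p : ℕ}

lemma mem_Ico_of_uniformIco_pos {b : ℕ} (h : 0 < uniformIco y p b) : b ∈ Ico y p := by
  by_contra hb
  rw [mem_Ico] at hb
  simp [uniformIco, hb] at h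

lemma sum_range_uniformIco_mul {pbar : ℕ} (hp : p ≤ pbar + 1) (f : ℕ → ℝ) :
    ∑ c ∈ range (pbar + 1), uniformIco y p c * f c = (∑ c ∈ Ico y p, f c) / (p - y : ℕ) := by
  have hsub : Ico y p ⊆ range (pbar + 1) := fun c hc => by
    rw [mem_Ico] at hc
    exact mem_range.2 (by omega)
  simp only [uniformIco, ite_mul, zero_mul, ← mem_Ico, sum_ite_mem, inter_eq_right.2 hsub,
    sum_div, one_div_mul_eq_div]

lemma isStrategy_uniformIco {pbar : ℕ} (hyp : y < p) (hp : p ≤ pbar + 1) :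
    IsStrategy pbar (uniformIco y p) := by
  refine ⟨fun b => ?_, ?_, fun b hb => if_neg (by omega)⟩
  · unfold uniformIco; split_ifs <;> positivity
  · have := sum_range_uniformIco_mul (y := y) hp (fun _ => 1)
    simp only [mul_one] at this
    rw [this, sum_const, Nat.card_Ico, nsmul_one]
    exact div_self (by exact_mod_cast (by omega : p - y ≠ 0))

lemma eu_uniformIco {pbar : ℕ} (hp : p ≤ pbar + 1) (v b : ℕ) :
    eu pbar v (uniformIco y p) b = (∑ c ∈ Ico y p, util v b c) / (p - y : ℕ) :=
  sum_range_uniformIco_mul hp _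

end uniformIco

lemma sum_Ico_cast_le (a p : ℕ) : ∑ c ∈ Ico a p, (c : ℝ) ≤ (p - a : ℕ) * ((p : ℝ) - 1) := by
  have := sum_le_card_nsmul (Ico a p) (fun c => (c : ℝ)) ((p : ℝ) - 1) fun c hc => by
    have : (c : ℝ) + 1 ≤ p := by exact_mod_cast (mem_Ico.1 hc).2
    linarith
  rwa [Nat.card_Ico, nsmul_eq_mul] at this

section sumUtil

variable {v y p b : ℕ}

lemma sum_util_Ico_of_le (hpb : p ≤ b) :
    ∑ c ∈ Ico y p, util v b c = (p - y : ℕ) * ((v : ℝ) - b) := by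
  rw [sum_congr rfl fun c hc => util_of_lt (by have := (mem_Ico.1 hc).2; omega), sum_const,
    Nat.card_Ico, nsmul_eq_mul]

lemma sum_util_Ico_le_of_lt (hby : b < y) :
    ∑ c ∈ Ico y p, util v b c ≤ (p - y : ℕ) * ((p : ℝ) - 1) := by
  rw [sum_congr rfl fun c hc => util_of_gt (by have := (mem_Ico.1 hc).1; omega)]
  exact sum_Ico_cast_le y p

/-- A bid `b` inside the support wins against the `b - y` lower bids, ties at `b`, and is paid
at most `p - 1` by each of the `p - b - 1` higher bids. -/
lemma sum_util_Ico_le_of_mem (hyb : y ≤ b) (hbp : b < p) :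
    ∑ c ∈ Ico y p, util v b c
      ≤ ((b : ℝ) - y) * ((v : ℝ) - b) + v / 2 + ((p : ℝ) - b - 1) * ((p : ℝ) - 1) := by
  rw [← sum_Ico_consecutive _ hyb hbp.le, sum_eq_sum_Ico_succ_bot hbp, util_self,
    sum_congr rfl fun c hc => util_of_lt (mem_Ico.1 hc).2, sum_const, Nat.card_Ico,
    nsmul_eq_mul, Nat.cast_sub hyb,
    sum_congr rfl fun c hc => util_of_gt (Nat.lt_of_succ_le (mem_Ico.1 hc).1)]
  have := sum_Ico_cast_le (b + 1) p
  rw [Nat.cast_sub hbp, Nat.cast_succ] at this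
  linarith

lemma sum_util_Ico_lt_of_ne (hyp : y < p) (hv : (4 * p : ℝ) < v + 2 * y + 2) (hb : b ≠ p) :
    ∑ c ∈ Ico y p, util v b c < ∑ c ∈ Ico y p, util v p c := by
  rw [sum_util_Ico_of_le le_rfl, Nat.cast_sub hyp.le]
  have hyp' : (y : ℝ) + 1 ≤ p := by exact_mod_cast hyp
  rcases lt_or_ge b y with hby | hyb
  · have := sum_util_Ico_le_of_lt (v := v) (p := p) hby
    rw [Nat.cast_sub hyp.le] at this
    nlinarith
  rcases lt_or_gt_of_ne hb with hbp | hpb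
  · have hbp' : (b : ℝ) + 1 ≤ p := by exact_mod_cast hbp
    have hyb' : (y : ℝ) ≤ b := by exact_mod_cast hyb
    have := sum_util_Ico_le_of_mem (v := v) hyb hbp
    -- `(p - y) (v - p)` minus the bound of `sum_util_Ico_le_of_mem` equals
    -- `(p - b - 1) (v - 2 p - b + y + 2) + (v / 2 - 2 p + y + 1)`.
    nlinarith [mul_nonneg (by linarith : (0 : ℝ) ≤ p - b - 1)
      (by linarith : (0 : ℝ) ≤ v - 2 * p - b + y + 2)]
  · rw [sum_util_Ico_of_le hpb.le, Nat.cast_sub hyp.le]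
    have : (p : ℝ) + 1 ≤ b := by exact_mod_cast hpb
    nlinarith

end sumUtil

theorem stmt15_general (vl vh pbar : ℕ) (hevl : Even vl)
    (hpbar : vh / 2 + 2 ≤ pbar)
    (p y n : ℕ) (hp1 : vl / 2 + 1 < p)
    (hp2 : (p : ℝ) < (vl : ℝ) / 2 + ((vh : ℝ) / 2 - (vl : ℝ) / 2) / 5 + 4 / 5)
    (hy : y + 3 * (p - 1 - vl / 2) = vl / 2)
    (hn : n = 4 * (p - 1 - vl / 2) + 1)
    (σl σh : ℕ → ℝ)
    (hσl : σl = fun c => if y ≤ c ∧ c < p then (1 : ℝ) / n else 0)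
    (hσh : σh = pureS p) :
    IsNash pbar vl vh σl σh ∧
    ∀ b ∈ range (pbar + 1), b ≠ p → eu pbar vh σl b < eu pbar vh σl p := by
  obtain ⟨r, rfl⟩ := hevl
  have hp2' : 10 * p < 4 * (r + r) + vh + 8 := by
    have : (10 * p : ℝ) < 4 * (r + r : ℕ) + vh + 8 := by push_cast at hp2 ⊢; linarith
    exact_mod_cast this
  have hyp : y < p := by omega
  have hppbar : p ≤ pbar := by omega
  have hl : ((r + r : ℕ) : ℝ) ≤ 2 * p := by exact_mod_cast (by omega : r + r ≤ 2 * p)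
  have hh : (4 * p : ℝ) < vh + 2 * y + 2 := by
    exact_mod_cast (by omega : 4 * p < vh + 2 * y + 2)
  obtain rfl : σl = uniformIco y p := by
    rw [hσl, hn, show 4 * (p - 1 - (r + r) / 2) + 1 = p - y by omega]
    rfl
  subst hσh
  have hbest (b : ℕ) (hb : b ≠ p) :
      eu pbar vh (uniformIco y p) b < eu pbar vh (uniformIco y p) p := by
    rw [eu_uniformIco (by omega), eu_uniformIco (by omega)]
    exact div_lt_div_of_pos_right (sum_util_Ico_lt_of_ne hyp hh hb)
      (by exact_mod_cast (by omega : 0 < p - y))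
  refine ⟨⟨isStrategy_uniformIco hyp (by omega), isStrategy_pureS hppbar, ?_, ?_⟩,
    fun b _ hb => hbest b hb⟩
  · intro b _ hb b' _
    rw [eu_pureS hppbar, eu_pureS hppbar,
      util_of_gt (mem_Ico.1 (mem_Ico_of_uniformIco_pos hb)).2]
    exact util_le_of_le_two_mul hl b'
  · intro b _ hb b' _
    rw [eq_of_pureS_pos hb]
    rcases eq_or_ne b' p with rfl | hb'
    · exact le_rfl
    · exact (hbest b' hb').le

theorem stmt15 (vl vh pbar : ℕ) (hvl : 0 < vl) (hevl : Even vl) (hevh : Even vh)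
    (hlt : vl < vh) (hpbar : vh / 2 + 2 ≤ pbar)
    (hES : 4 < vh - vl) (hratio : 3 * vh < 8 * vl)
    (p y n : ℕ) (hp1 : vl / 2 + 1 < p)
    (hp2 : (p : ℝ) < (vl : ℝ) / 2 + ((vh : ℝ) / 2 - (vl : ℝ) / 2) / 5 + 4 / 5)
    (hy : y + 3 * (p - 1 - vl / 2) = vl / 2)
    (hn : n = 4 * (p - 1 - vl / 2) + 1)
    (σl σh : ℕ → ℝ)
    (hσl : σl = fun c => if y ≤ c ∧ c < p then (1 : ℝ) / n else 0)
    (hσh : σh = pureS p) :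
    IsNash pbar vl vh σl σh ∧
    ∀ b ∈ range (pbar + 1), b ≠ p → eu pbar vh σl b < eu pbar vh σl p :=
  stmt15_general vl vh pbar hevl hpbar p y n hp1 hp2 hy hn σl σh hσl hσh
end
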